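/- Let x ∈ ℝ² have irrational slope ξ. Then the uniform exponent satisfies μ̂(x, 0) = 1/ω(ξ), where ω(ξ) is the irrationality measure exponent of ξ. -/

import Mathlib

open Matrix MeasureTheory

/-- Denominator `q k` of the `k`-th convergent of the continued fraction of `ξ`. -/
noncomputable def qden (ξ : ℝ) (k : ℕ) : ℝ := (GenContFract.of ξ).dens k

/-- Numerator `p k` of the `k`-th convergent of the continued fraction of `ξ`. -/
noncomputable def pnum (ξ : ℝ) (k : ℕ) : ℝ := (GenContFract.of ξ).nums k

/-- Action of an integer matrix on `ℝ²` by left multiplication. -/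
noncomputable def act (g : Matrix (Fin 2) (Fin 2) ℤ) (x : Fin 2 → ℝ) : Fin 2 → ℝ :=
  (g.map (Int.cast : ℤ → ℝ)).mulVec x

/-- Sup norm of an integer `2 × 2` matrix. -/
noncomputable def mnorm (g : Matrix (Fin 2) (Fin 2) ℤ) : ℝ :=
  max (max |(g 0 0 : ℝ)| |(g 0 1 : ℝ)|) (max |(g 1 0 : ℝ)| |(g 1 1 : ℝ)|)

/-- Sup norm on `ℝ²`. -/
noncomputable def vnorm (v : Fin 2 → ℝ) : ℝ := max |v 0| |v 1|

/-- The set of exponents `w` such that `|v α + u| ≤ |v| ^ (-w)` has infinitely many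
integer solutions `(v, u)`; its supremum is the irrationality measure `ω(α)`. -/
def omegaSet (α : ℝ) : Set ℝ :=
  {w : ℝ | {p : ℤ × ℤ | |(p.1 : ℝ) * α + (p.2 : ℝ)| ≤ |(p.1 : ℝ)| ^ (-w)}.Infinite}

/-- The set of exponents `μ` such that `|γ x - y| ≤ |γ| ^ (-μ)` for infinitely many
`γ ∈ SL(2, ℤ)`; its supremum is `μ(x, y)`. -/
def muSet (x y : Fin 2 → ℝ) : Set ℝ :=
  {μ : ℝ | {γ : Matrix (Fin 2) (Fin 2) ℤ |
    γ.det = 1 ∧ vnorm (act γ x - y) ≤ mnorm γ ^ (-μ)}.Infinite}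

/-- The set of exponents `μ` such that for all sufficiently large `T` there is
`γ ∈ SL(2, ℤ)` with `|γ| ≤ T` and `|γ x - y| ≤ T ^ (-μ)`; its supremum is `μ̂(x, y)`. -/
def muHatSet (x y : Fin 2 → ℝ) : Set ℝ :=
  {μ : ℝ | ∃ T₀ : ℝ, ∀ T : ℝ, T₀ ≤ T → ∃ γ : Matrix (Fin 2) (Fin 2) ℤ,
    γ.det = 1 ∧ mnorm γ ≤ T ∧ vnorm (act γ x - y) ≤ T ^ (-μ)}

/-!
Write `ξ = x 0 / x 1`. The `i`-th coordinate of `γ x` is `x 1 * (γ i 0 * ξ + γ i 1)`, so `γ x` is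
small exactly when both rows of `γ` are good approximations of `ξ`.

Lower bound: consecutive convergents `p k / q k` of `ξ` give `γ ∈ SL(2, ℤ)` with rows
`± (q (k+1), -p (k+1))` and `(q k, -p k)`, of size `≍ q (k+1)` and with `|γ x| ≪ 1 / q (k+1)`.
If `e > ω(ξ)`, then eventually `q (k+1) < (q k) ^ e`; choosing `k` with `T` between the sizes of
two consecutive such matrices gives `|γ x| ≪ T ^ (-1/e)`, hence `μ̂ ≥ 1/e`.

Upper bound: let `|v ξ + u| ≤ |v| ^ (-e)` with `|v| = r` large, and let `γ` be admissible at
height `T ≈ r ^ (1/μ)`. For each row `(a, b)` of `γ` the integer `v b - a u` equals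
`v (a ξ + b) - a (v ξ + u)`, which is `< 1` in absolute value when `μ e > 1`, so it vanishes;
since `det γ = 1` this forces `v = 0`, a contradiction. Hence `μ̂ ≤ 1/e` for all `e < ω(ξ)`.
-/

open Filter GenContFract Topology

section ContinuedFraction

variable {ξ : ℝ}

lemma not_terminatedAt_of_irrational (hξ : Irrational ξ) (n : ℕ) :
    ¬(GenContFract.of ξ).TerminatedAt n := fun h => by
  obtain ⟨q, hq⟩ := (terminates_iff_rat ξ).mp ⟨n, h⟩
  exact hξ ⟨q, hq.symm⟩

lemma exists_int_contsAux_eq (ξ : ℝ) : ∀ n, ∃ a b : ℤ, (GenContFract.of ξ).contsAux n = ⟨a, b⟩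
  | 0 => ⟨1, 0, by simp⟩
  | 1 => ⟨⌊ξ⌋, 1, by simp [of_h_eq_floor]⟩
  | n + 2 => by
    obtain ⟨a₀, b₀, h₀⟩ := exists_int_contsAux_eq ξ n
    obtain ⟨a₁, b₁, h₁⟩ := exists_int_contsAux_eq ξ (n + 1)
    cases hgp : (GenContFract.of ξ).s.get? n with
    | none => exact ⟨a₁, b₁, (contsAux_stable_step_of_terminated hgp).trans h₁⟩
    | some gp =>
      obtain ⟨z, hz⟩ := exists_int_eq_of_partDen (partDen_eq_s_b hgp)
      refine ⟨z * a₁ + a₀, z * b₁ + b₀, ?_⟩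
      rw [contsAux_recurrence hgp h₀ h₁, of_partNum_eq_one (partNum_eq_s_a hgp), hz]
      push_cast
      ring_nf

noncomputable def pnumInt (ξ : ℝ) (k : ℕ) : ℤ := ⌊pnum ξ k⌋

noncomputable def qdenInt (ξ : ℝ) (k : ℕ) : ℤ := ⌊qden ξ k⌋

@[simp]
lemma cast_pnumInt (ξ : ℝ) (k : ℕ) : (pnumInt ξ k : ℝ) = pnum ξ k := by
  obtain ⟨a, b, h⟩ := exists_int_contsAux_eq ξ (k + 1)
  rw [pnumInt, pnum, num_eq_conts_a, nth_cont_eq_succ_nth_contAux, h, Int.floor_intCast]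

@[simp]
lemma cast_qdenInt (ξ : ℝ) (k : ℕ) : (qdenInt ξ k : ℝ) = qden ξ k := by
  obtain ⟨a, b, h⟩ := exists_int_contsAux_eq ξ (k + 1)
  rw [qdenInt, qden, den_eq_conts_b, nth_cont_eq_succ_nth_contAux, h, Int.floor_intCast]

lemma qden_mono (ξ : ℝ) : Monotone (qden ξ) :=
  monotone_nat_of_le_succ fun _ => of_den_mono

lemma one_le_qden (ξ : ℝ) (k : ℕ) : 1 ≤ qden ξ k := by
  simpa [qden, zeroth_den_eq_one] using qden_mono ξ k.zero_le

lemma qden_pos (ξ : ℝ) (k : ℕ) : 0 < qden ξ k := one_pos.trans_le (one_le_qden ξ k)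

lemma tendsto_qden (hξ : Irrational ξ) : Tendsto (qden ξ) atTop atTop := by
  refine tendsto_atTop_mono' atTop ?_ tendsto_natCast_atTop_atTop
  filter_upwards [eventually_ge_atTop 5] with k hk
  calc (k : ℝ) ≤ Nat.fib k := mod_cast Nat.le_fib_self hk
    _ ≤ Nat.fib (k + 1) := mod_cast Nat.fib_mono k.le_succ
    _ ≤ qden ξ k := succ_nth_fib_le_of_nth_den (Or.inr (not_terminatedAt_of_irrational hξ _))

lemma tendsto_qdenInt (hξ : Irrational ξ) : Tendsto (qdenInt ξ) atTop atTop :=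
  (tendsto_intCast_atTop_iff (R := ℝ)).mp (by simpa using tendsto_qden hξ)

lemma abs_qden_mul_sub_pnum_le (hξ : Irrational ξ) (k : ℕ) :
    |qden ξ k * ξ - pnum ξ k| ≤ 1 / qden ξ (k + 1) := by
  have hq := qden_pos ξ k
  have h : |ξ - pnum ξ k / qden ξ k| ≤ 1 / (qden ξ k * qden ξ (k + 1)) := by
    simpa [conv_eq_num_div_den, pnum, qden] using
      abs_sub_convs_le (not_terminatedAt_of_irrational hξ k)
  calc |qden ξ k * ξ - pnum ξ k| = qden ξ k * |ξ - pnum ξ k / qden ξ k| := by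
        rw [← abs_of_pos hq, ← abs_mul, abs_of_pos hq, mul_sub, mul_div_cancel₀ _ hq.ne']
    _ ≤ qden ξ k * (1 / (qden ξ k * qden ξ (k + 1))) := by gcongr
    _ = 1 / qden ξ (k + 1) := by field_simp

lemma abs_pnum_le (hξ : Irrational ξ) (k : ℕ) : |pnum ξ k| ≤ (|ξ| + 1) * qden ξ k := by
  have hq := qden_pos ξ k
  have hsmall : |qden ξ k * ξ - pnum ξ k| ≤ 1 :=
    (abs_qden_mul_sub_pnum_le hξ k).trans (div_le_one_of_le₀ (one_le_qden ξ _) (qden_pos ξ _).le)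
  calc |pnum ξ k| = |qden ξ k * ξ - (qden ξ k * ξ - pnum ξ k)| := by ring_nf
    _ ≤ |qden ξ k * ξ| + |qden ξ k * ξ - pnum ξ k| := abs_sub _ _
    _ ≤ qden ξ k * |ξ| + qden ξ k := by
        rw [abs_mul, abs_of_pos hq]; linarith [one_le_qden ξ k]
    _ = (|ξ| + 1) * qden ξ k := by ring

lemma pnum_mul_qden_succ_sub (hξ : Irrational ξ) (k : ℕ) :
    pnum ξ k * qden ξ (k + 1) - qden ξ k * pnum ξ (k + 1) = (-1) ^ (k + 1) :=
  SimpContFract.determinant (s := ⟨GenContFract.of ξ, of_isSimpContFract ξ⟩)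
    (not_terminatedAt_of_irrational hξ k)

end ContinuedFraction

section MatrixAction

lemma abs_le_mnorm (γ : Matrix (Fin 2) (Fin 2) ℤ) (i j : Fin 2) : |(γ i j : ℝ)| ≤ mnorm γ := by
  fin_cases i <;> fin_cases j <;> simp [mnorm]

lemma mnorm_le {γ : Matrix (Fin 2) (Fin 2) ℤ} {B : ℝ} (h : ∀ i j, |(γ i j : ℝ)| ≤ B) :
    mnorm γ ≤ B :=
  max_le (max_le (h 0 0) (h 0 1)) (max_le (h 1 0) (h 1 1))

lemma vnorm_smul (c : ℝ) (v : Fin 2 → ℝ) : vnorm (c • v) = |c| * vnorm v := by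
  simp [vnorm, abs_mul, mul_max_of_nonneg]

lemma act_apply_slope (γ : Matrix (Fin 2) (Fin 2) ℤ) (ξ : ℝ) (i : Fin 2) :
    act γ ![ξ, 1] i = γ i 0 * ξ + γ i 1 := by
  simp [act, mulVec, dotProduct, Fin.sum_univ_two]

lemma vnorm_act_slope_le_iff {γ : Matrix (Fin 2) (Fin 2) ℤ} {ξ B : ℝ} :
    vnorm (act γ ![ξ, 1]) ≤ B ↔ ∀ i, |(γ i 0 : ℝ) * ξ + γ i 1| ≤ B := by
  simp [vnorm, act_apply_slope, Fin.forall_fin_two]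

lemma vnorm_act_sub_zero {x : Fin 2 → ℝ} (hx : x 1 ≠ 0) (γ : Matrix (Fin 2) (Fin 2) ℤ) :
    vnorm (act γ x - 0) = |x 1| * vnorm (act γ ![x 0 / x 1, 1]) := by
  have hx_eq : x = x 1 • ![x 0 / x 1, 1] := by
    ext i; fin_cases i <;> simp [mul_div_cancel₀ _ hx]
  rw [sub_zero, ← vnorm_smul, act, act, ← mulVec_smul, ← hx_eq]

end MatrixAction

section ConvergentMatrix

variable {ξ : ℝ}

/-- The sign `(-1) ^ k` makes the determinant `1` instead of `(-1) ^ (k + 1)`. -/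
noncomputable def convMatrix (ξ : ℝ) (k : ℕ) : Matrix (Fin 2) (Fin 2) ℤ :=
  !![(-1) ^ k * qdenInt ξ (k + 1), -((-1) ^ k * pnumInt ξ (k + 1)); qdenInt ξ k, -pnumInt ξ k]

lemma det_convMatrix (hξ : Irrational ξ) (k : ℕ) : (convMatrix ξ k).det = 1 := by
  have hdet := pnum_mul_qden_succ_sub hξ k
  rw [← cast_pnumInt, ← cast_qdenInt, ← cast_pnumInt, ← cast_qdenInt] at hdet
  have hdetInt :
      pnumInt ξ k * qdenInt ξ (k + 1) - qdenInt ξ k * pnumInt ξ (k + 1) = (-1) ^ (k + 1) :=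
    mod_cast hdet
  have hsq : ((-1 : ℤ) ^ k) ^ 2 = 1 := by rw [← pow_mul, pow_mul', neg_one_sq, one_pow]
  rw [convMatrix, det_fin_two_of]
  linear_combination (-(-1 : ℤ) ^ k) * hdetInt + hsq

lemma mnorm_convMatrix_le (hξ : Irrational ξ) (k : ℕ) :
    mnorm (convMatrix ξ k) ≤ (|ξ| + 1) * qden ξ (k + 1) := by
  have hq : qden ξ (k + 1) ≤ (|ξ| + 1) * qden ξ (k + 1) :=
    le_mul_of_one_le_left (qden_pos ξ _).le (by linarith [abs_nonneg ξ])
  have hq' : (|ξ| + 1) * qden ξ k ≤ (|ξ| + 1) * qden ξ (k + 1) := by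
    gcongr; exact qden_mono ξ k.le_succ
  refine mnorm_le fun i j => ?_
  fin_cases i <;> fin_cases j <;>
    simp only [convMatrix, Fin.zero_eta, Fin.mk_one, Fin.isValue, of_apply, cons_val',
      cons_val_zero, cons_val_one, cons_val_fin_one, Int.cast_mul, Int.cast_pow, Int.cast_neg, Int.cast_one,
      cast_qdenInt, cast_pnumInt, abs_mul, abs_pow, abs_neg, abs_one, one_pow, one_mul,
      abs_of_pos (qden_pos ξ _)]
  · exact hq
  · exact abs_pnum_le hξ _
  · exact (qden_mono ξ k.le_succ).trans hq
  · exact (abs_pnum_le hξ k).trans hq'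

lemma vnorm_act_convMatrix_le (hξ : Irrational ξ) (k : ℕ) :
    vnorm (act (convMatrix ξ k) ![ξ, 1]) ≤ 1 / qden ξ (k + 1) := by
  refine vnorm_act_slope_le_iff.mpr fun i => ?_
  fin_cases i
  · calc _ = |qden ξ (k + 1) * ξ - pnum ξ (k + 1)| := by
          simp only [convMatrix, Fin.zero_eta, Fin.isValue, of_apply, cons_val', cons_val_zero,
            cons_val_fin_one, Int.cast_mul, Int.cast_pow, Int.cast_neg, Int.cast_one, cast_qdenInt,
            cons_val_one, cast_pnumInt]
          rw [mul_assoc, ← mul_neg, ← mul_add, abs_mul, abs_neg_one_pow, one_mul, sub_eq_add_neg]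
      _ ≤ 1 / qden ξ (k + 2) := abs_qden_mul_sub_pnum_le hξ _
      _ ≤ 1 / qden ξ (k + 1) := by gcongr; exacts [qden_pos ξ _, qden_mono ξ (k + 1).le_succ]
  · simpa [convMatrix, sub_eq_add_neg] using abs_qden_mul_sub_pnum_le hξ k

end ConvergentMatrix

section ApproximationExponent

variable {ξ : ℝ}

def approxSet (ξ w : ℝ) : Set (ℤ × ℤ) := {p | |(p.1 : ℝ) * ξ + p.2| ≤ |(p.1 : ℝ)| ^ (-w)}

lemma abs_intCast_rpow_neg_le_one (v : ℤ) {w : ℝ} (hw : 0 ≤ w) : |(v : ℝ)| ^ (-w) ≤ 1 := by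
  rcases eq_or_ne v 0 with rfl | hv
  · simpa using Real.zero_rpow_le_one (-w)
  · exact Real.rpow_le_one_of_one_le_of_nonpos (mod_cast Int.one_le_abs hv) (neg_nonpos.mpr hw)

lemma exists_mem_approxSet_le_abs {w : ℝ} (hw : 0 ≤ w) (hinf : (approxSet ξ w).Infinite)
    (R : ℝ) : ∃ p ∈ approxSet ξ w, R ≤ |(p.1 : ℝ)| := by
  set B := |R| * (|ξ| + 1) + 1
  have hfin : {p : ℤ × ℤ | |(p.1 : ℝ)| < R ∧ |(p.1 : ℝ) * ξ + p.2| ≤ 1}.Finite := by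
    refine (isCompact_closedBall (0 : ℤ × ℤ) B).finite_of_discrete.subset fun p ⟨hv, hp⟩ => ?_
    have hvR : |(p.1 : ℝ)| ≤ |R| := hv.le.trans (le_abs_self R)
    have hu : |(p.2 : ℝ)| ≤ |(p.1 : ℝ) * ξ + p.2| + |(p.1 : ℝ)| * |ξ| := by
      simpa [abs_mul] using abs_sub (p.1 * ξ + p.2 : ℝ) (p.1 * ξ)
    have hvξ : |(p.1 : ℝ)| * |ξ| ≤ |R| * |ξ| := by gcongr
    simp only [Metric.mem_closedBall, dist_zero_right, Prod.norm_def, Int.norm_eq_abs, max_le_iff]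
    constructor <;> nlinarith [abs_nonneg R, abs_nonneg ξ]
  obtain ⟨p, hp, hpF⟩ := hinf.exists_notMem_finite hfin
  exact ⟨p, hp, not_lt.mp fun hv => hpF ⟨hv, hp.trans (abs_intCast_rpow_neg_le_one _ hw)⟩⟩

lemma convergent_mem_approxSet_iff (k : ℕ) (w : ℝ) :
    (qdenInt ξ k, -pnumInt ξ k) ∈ approxSet ξ w ↔ |qden ξ k * ξ - pnum ξ k| ≤ qden ξ k ^ (-w) := by
  simp [approxSet, abs_of_pos (qden_pos ξ k), sub_eq_add_neg]

lemma eventually_convergent_notMem (hξ : Irrational ξ) {S : Set (ℤ × ℤ)} (hS : S.Finite) :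
    ∀ᶠ k in atTop, (qdenInt ξ k, -pnumInt ξ k) ∉ S :=
  (((tendsto_qdenInt hξ).mono_right atTop_le_cofinite).eventually
    (hS.image Prod.fst).eventually_cofinite_notMem).mono fun _ hk hmem => hk ⟨_, hmem, rfl⟩

lemma one_mem_omegaSet (hξ : Irrational ξ) : 1 ∈ omegaSet ξ := fun hfin => by
  obtain ⟨k, hk⟩ := (eventually_convergent_notMem hξ hfin).exists
  refine hk ((convergent_mem_approxSet_iff k 1).mpr ?_)
  calc |qden ξ k * ξ - pnum ξ k| ≤ 1 / qden ξ (k + 1) := abs_qden_mul_sub_pnum_le hξ k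
    _ ≤ 1 / qden ξ k := by gcongr; exacts [qden_pos ξ k, qden_mono ξ k.le_succ]
    _ = qden ξ k ^ (-1 : ℝ) := by rw [Real.rpow_neg_one, one_div]

lemma eventually_qden_succ_lt_rpow (hξ : Irrational ξ) {w : ℝ} (hw : w ∉ omegaSet ξ) :
    ∀ᶠ k in atTop, qden ξ (k + 1) < qden ξ k ^ w := by
  have hfin : (approxSet ξ w).Finite := Set.not_infinite.mp hw
  filter_upwards [eventually_convergent_notMem hξ hfin] with k hk
  rw [convergent_mem_approxSet_iff, not_le, Real.rpow_neg (qden_pos ξ k).le, inv_eq_one_div] at hk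
  exact (one_div_lt_one_div (Real.rpow_pos_of_pos (qden_pos ξ k) w) (qden_pos ξ _)).mp
    (hk.trans_le (abs_qden_mul_sub_pnum_le hξ k))

end ApproximationExponent

section UpperBound

lemma int_cross_eq_zero {ξ δ η : ℝ} {a b v u : ℤ} (hab : |(a : ℝ) * ξ + b| ≤ δ)
    (hvu : |(v : ℝ) * ξ + u| ≤ η) (h : |(v : ℝ)| * δ + |(a : ℝ)| * η < 1) :
    v * b - a * u = 0 := by
  have hcast : ((v * b - a * u : ℤ) : ℝ) = v * (a * ξ + b) - a * (v * ξ + u) := by push_cast; ring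
  have hlt : |((v * b - a * u : ℤ) : ℝ)| < 1 := by
    rw [hcast]
    calc _ ≤ |(v : ℝ) * (a * ξ + b)| + |(a : ℝ) * (v * ξ + u)| := abs_sub _ _
      _ ≤ |(v : ℝ)| * δ + |(a : ℝ)| * η := by rw [abs_mul, abs_mul]; gcongr
      _ < 1 := h
  exact Int.abs_lt_one_iff.mp (mod_cast hlt)

lemma eq_zero_of_forall_cross_eq_zero {γ : Matrix (Fin 2) (Fin 2) ℤ} (hγ : γ.det = 1) {v u : ℤ}
    (h : ∀ i, v * γ i 1 - γ i 0 * u = 0) : v = 0 := by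
  have hker : γ *ᵥ ![-u, v] = 0 := by
    ext i
    simp only [mulVec, dotProduct, Fin.sum_univ_two, cons_val_zero, cons_val_one, cons_val_fin_one,
      Pi.zero_apply]
    linarith [h i]
  simpa using congrFun (eq_zero_of_mulVec_eq_zero (by simp [hγ]) hker) 1

lemma tendsto_mul_rpow_inv_mul_rpow_neg {a μ e : ℝ} (ha : 0 < a) (hμ : 0 < μ) (hμe : 1 < μ * e) :
    Tendsto (fun r => (a * r) ^ μ⁻¹ * r ^ (-e)) atTop (𝓝 0) := by
  have hexp : 0 < e - μ⁻¹ := by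
    rw [sub_pos, inv_lt_iff_one_lt_mul₀' hμ]; exact hμe
  have h := (tendsto_rpow_neg_atTop hexp).const_mul (a ^ μ⁻¹)
  rw [mul_zero] at h
  refine h.congr' ?_
  filter_upwards [eventually_gt_atTop 0] with r hr
  rw [Real.mul_rpow ha.le hr.le, mul_assoc, ← Real.rpow_add hr, neg_sub, sub_eq_add_neg]

lemma notMem_muHatSet {x : Fin 2 → ℝ} (hx : x 1 ≠ 0) {μ e : ℝ} (hμ : 0 < μ)
    (he : e ∈ omegaSet (x 0 / x 1)) (hμe : 1 < μ * e) : μ ∉ muHatSet x 0 := by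
  have hc : 0 < |x 1| := abs_pos.mpr hx
  have he0 : 0 < e := pos_of_mul_pos_right (one_pos.trans hμe) hμ.le
  rintro ⟨T₀, hT₀⟩
  set T : ℝ → ℝ := fun r => (4 / |x 1| * r) ^ μ⁻¹
  have hT : Tendsto T atTop atTop :=
    (tendsto_rpow_atTop (inv_pos.mpr hμ)).comp (tendsto_id.const_mul_atTop (by positivity))
  obtain ⟨R, hR⟩ := ((hT.eventually_ge_atTop T₀).and
    ((tendsto_mul_rpow_inv_mul_rpow_neg (a := 4 / |x 1|) (by positivity) hμ hμe).eventually_lt_const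
      (by norm_num : (0 : ℝ) < 1 / 2))).exists_forall_of_atTop
  obtain ⟨⟨v, u⟩, hvu, hvR⟩ := exists_mem_approxSet_le_abs he0.le he (max R 1)
  set r := |(v : ℝ)|
  have hr : 1 ≤ r := (le_max_right _ _).trans hvR
  obtain ⟨hT₀r, hTr : T r * r ^ (-e) < 1 / 2⟩ := hR r ((le_max_left _ _).trans hvR)
  obtain ⟨γ, hdet, hγT, hγx⟩ := hT₀ (T r) hT₀r
  have hTμ : T r ^ (-μ) = |x 1| * (1 / (4 * r)) := by
    rw [Real.rpow_neg (Real.rpow_nonneg (by positivity) _),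
      Real.rpow_inv_rpow (by positivity) hμ.ne']
    field_simp
  rw [vnorm_act_sub_zero hx, hTμ, mul_le_mul_iff_right₀ hc, vnorm_act_slope_le_iff] at hγx
  have hr4 : r * (1 / (4 * r)) = 1 / 4 := by field_simp
  have hcross : ∀ i, v * γ i 1 - γ i 0 * u = 0 := fun i =>
    int_cross_eq_zero (hγx i) hvu <| by
      calc r * (1 / (4 * r)) + |(γ i 0 : ℝ)| * r ^ (-e) ≤ 1 / 4 + T r * r ^ (-e) := by
            rw [hr4]; gcongr; exact (abs_le_mnorm γ i 0).trans hγT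
        _ < 1 := by linarith
  have hv := eq_zero_of_forall_cross_eq_zero hdet hcross
  exact absurd hr (by simp [r, hv])

end UpperBound

section LowerBound

lemma exists_le_lt_succ_of_tendsto {f : ℕ → ℝ} (hf : Tendsto f atTop atTop) {K : ℕ} {T : ℝ}
    (hK : f K ≤ T) : ∃ k ≥ K, f k ≤ T ∧ T < f (k + 1) := by
  have hex : ∃ n, T < f (K + n) := by
    obtain ⟨N, hN⟩ := (hf.eventually_gt_atTop T).exists_forall_of_atTop
    exact ⟨N, hN _ (Nat.le_add_left N K)⟩
  have hpos : Nat.find hex ≠ 0 := fun h => (Nat.find_spec hex).not_ge (by simpa [h] using hK)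
  refine ⟨K + (Nat.find hex - 1), Nat.le_add_right _ _, not_lt.mp (Nat.find_min hex (by omega)), ?_⟩
  rw [add_assoc, Nat.sub_add_cancel (Nat.pos_of_ne_zero hpos)]
  exact Nat.find_spec hex

variable {x : Fin 2 → ℝ}

lemma mem_muHatSet_of_nonpos (hx : x 1 ≠ 0) (hξ : Irrational (x 0 / x 1)) {μ : ℝ} (hμ : μ ≤ 0) :
    μ ∈ muHatSet x 0 := by
  set ξ := x 0 / x 1
  obtain ⟨k, hk⟩ := ((tendsto_qden hξ).eventually_ge_atTop |x 1|).exists_forall_of_atTop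
  have hq := qden_pos ξ (k + 1)
  refine ⟨max ((|ξ| + 1) * qden ξ (k + 1)) 1, fun T hT => ⟨convMatrix ξ k, det_convMatrix hξ k,
    (mnorm_convMatrix_le hξ k).trans ((le_max_left _ _).trans hT), ?_⟩⟩
  rw [vnorm_act_sub_zero hx]
  calc |x 1| * vnorm (act (convMatrix ξ k) ![ξ, 1]) ≤ |x 1| * (1 / qden ξ (k + 1)) := by
        gcongr; exact vnorm_act_convMatrix_le hξ k
    _ ≤ 1 := by rw [mul_one_div, div_le_one hq]; exact hk _ k.le_succ
    _ ≤ T ^ (-μ) := Real.one_le_rpow ((le_max_right _ _).trans hT) (neg_nonneg.mpr hμ)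

lemma mem_muHatSet_of_notMem_omegaSet (hx : x 1 ≠ 0) (hξ : Irrational (x 0 / x 1)) {μ e : ℝ}
    (he : 0 < e) (hω : e ∉ omegaSet (x 0 / x 1)) (hμe : μ * e < 1) : μ ∈ muHatSet x 0 := by
  set ξ := x 0 / x 1
  set C := |ξ| + 1
  have hC : 0 < C := by positivity
  have hη : 0 < e⁻¹ - μ := by rw [sub_pos, ← one_div, lt_div_iff₀ he]; exact hμe
  obtain ⟨K, hK⟩ := (eventually_qden_succ_lt_rpow hξ hω).exists_forall_of_atTop
  obtain ⟨T₁, hT₁⟩ := ((tendsto_rpow_atTop hη).eventually_ge_atTop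
    (|x 1| * C ^ e⁻¹)).exists_forall_of_atTop
  have hCq : Tendsto (fun k => C * qden ξ (k + 1)) atTop atTop :=
    ((tendsto_qden hξ).comp (tendsto_add_atTop_nat 1)).const_mul_atTop hC
  refine ⟨max (C * qden ξ (K + 1)) T₁, fun T hT => ?_⟩
  have hT0 : 0 < T := (mul_pos hC (qden_pos ξ _)).trans_le ((le_max_left _ _).trans hT)
  obtain ⟨k, hkK, hkT, hTk⟩ := exists_le_lt_succ_of_tendsto hCq ((le_max_left _ _).trans hT)
  refine ⟨convMatrix ξ k, det_convMatrix hξ k, (mnorm_convMatrix_le hξ k).trans hkT, ?_⟩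
  have hq : (T / C) ^ e⁻¹ < qden ξ (k + 1) := by
    rw [Real.rpow_inv_lt_iff_of_pos (by positivity) (qden_pos ξ _).le he, div_lt_iff₀' hC]
    exact hTk.trans (mul_lt_mul_of_pos_left (hK (k + 1) (by omega)) hC)
  rw [vnorm_act_sub_zero hx]
  calc |x 1| * vnorm (act (convMatrix ξ k) ![ξ, 1]) ≤ |x 1| * (1 / qden ξ (k + 1)) := by
        gcongr; exact vnorm_act_convMatrix_le hξ k
    _ ≤ |x 1| * (1 / (T / C) ^ e⁻¹) := by gcongr
    _ = |x 1| * C ^ e⁻¹ * T ^ (-e⁻¹) := by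
        rw [Real.div_rpow hT0.le hC.le, Real.rpow_neg hT0.le]; field_simp
    _ ≤ T ^ (e⁻¹ - μ) * T ^ (-e⁻¹) := by gcongr; exact hT₁ T ((le_max_right _ _).trans hT)
    _ = T ^ (-μ) := by rw [← Real.rpow_add hT0]; ring_nf

end LowerBound

lemma isLUB_one_div {S M : Set ℝ} {w : ℝ} (hw : IsLUB S w) (hw0 : 0 < w)
    (hM_of_notMem : ∀ ⦃μ e : ℝ⦄, 0 < e → e ∉ S → μ * e < 1 → μ ∈ M)
    (hM_notMem : ∀ ⦃μ e : ℝ⦄, 0 < μ → e ∈ S → 1 < μ * e → μ ∉ M) :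
    IsLUB M (1 / w) := by
  refine isLUB_Iio.of_subset_of_superset isLUB_Iic (fun μ hμ => ?_) (fun μ hμM => ?_)
  · obtain ⟨e, hwe, hμe⟩ : ∃ e, w < e ∧ μ * e < 1 := by
      rcases le_or_gt μ 0 with hμ0 | hμ0
      · exact ⟨w + 1, by linarith, by nlinarith⟩
      · obtain ⟨e, hwe, heμ⟩ := exists_between ((lt_one_div hμ0 hw0).mp hμ)
        exact ⟨e, hwe, (lt_div_iff₀' hμ0).mp heμ⟩
    exact hM_of_notMem (hw0.trans hwe) (fun he => (hw.1 he).not_gt hwe) hμe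
  · by_contra hμ
    have hμ0 : 0 < μ := (one_div_pos.mpr hw0).trans (not_le.mp hμ)
    obtain ⟨e, he, hμe, -⟩ := hw.exists_between ((one_div_lt hw0 hμ0).mp (not_le.mp hμ))
    exact hM_notMem hμ0 he ((div_lt_iff₀' hμ0).mp hμe) hμM

lemma isLUB_zero_of_not_bddAbove {S M : Set ℝ} (hS : ¬BddAbove S) (hM_nonpos : Set.Iic 0 ⊆ M)
    (hM_notMem : ∀ ⦃μ e : ℝ⦄, 0 < μ → e ∈ S → 1 < μ * e → μ ∉ M) : IsLUB M 0 := by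
  refine isLUB_Iic.of_subset_of_superset isLUB_Iic hM_nonpos fun μ hμM => ?_
  by_contra hμ
  have hμ0 : 0 < μ := not_le.mp hμ
  obtain ⟨e, he, hμe⟩ := not_bddAbove_iff.mp hS (1 / μ)
  exact hM_notMem hμ0 he ((div_lt_iff₀' hμ0).mp hμe) hμM

/-- `μ̂(x, 0) = 1 / ω(ξ)` for a point `x` with irrational slope `ξ`,
with the convention `1/∞ = 0` when `ω(ξ) = ∞`. -/
theorem stmt8 (x : Fin 2 → ℝ) (hx2 : x 1 ≠ 0) (hξ : Irrational (x 0 / x 1)) :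
    (∀ w : ℝ, IsLUB (omegaSet (x 0 / x 1)) w → IsLUB (muHatSet x 0) (1 / w)) ∧
      (¬ BddAbove (omegaSet (x 0 / x 1)) → IsLUB (muHatSet x 0) 0) :=
  ⟨fun _ hw => isLUB_one_div hw (one_pos.trans_le (hw.1 (one_mem_omegaSet hξ)))
      (fun _ _ => mem_muHatSet_of_notMem_omegaSet hx2 hξ) (fun _ _ => notMem_muHatSet hx2),
    fun hS => isLUB_zero_of_not_bddAbove hS (fun _ => mem_muHatSet_of_nonpos hx2 hξ)
      (fun _ _ => notMem_muHatSet hx2)⟩
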